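/- arXiv:1902.08175 — 6 statements merged into one kernel-verified Lean document; each statement's English description precedes it below -/
import Mathlib

section
/- Uniqueness of the dynamic relay (Theorem 2.1, uniqueness part): Let T > 0, ρ₁ < ρ₂ and k > 0 be given, u ∈ L²(0,T) and ξ ∈ [−1,1]. If y₁ and y₂ are both dynamic relay solutions for (u, ξ), then y₁(t) = y₂(t) for all t ∈ [0,T]. -/
open MeasureTheory Set

/-- The function `g(u) = k·(u − ρ₂)⁺ − k·(ρ₁ − u)⁺` driving the dynamic relay. -/
noncomputable def relayG (ρ₁ ρ₂ k u : ℝ) : ℝ :=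
  k * max (u - ρ₂) 0 - k * max (ρ₁ - u) 0

/-- `y` (with a.e. derivative `y'`) is a dynamic relay solution on `[0,T]` for input `u`
and initial state `ξ`: `y ∈ H¹(0,T)` (encoded by `y' ∈ L²(0,T)` together with the
fundamental-theorem-of-calculus representation), `y(0) = ξ`, `|y| ≤ 1` on `[0,T]`, and
`q(t) := g(u(t)) − y'(t)` satisfies `q(t)(z − y(t)) ≤ 0` for all `z ∈ [−1,1]`, a.e. `t`. -/
def IsDynRelay (T ρ₁ ρ₂ k : ℝ) (u : ℝ → ℝ) (ξ : ℝ) (y y' : ℝ → ℝ) : Prop :=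
  MemLp y' 2 (volume.restrict (Ioc (0:ℝ) T)) ∧
  y 0 = ξ ∧
  (∀ t ∈ Icc (0:ℝ) T, y t = ξ + ∫ s in (0:ℝ)..t, y' s) ∧
  (∀ t ∈ Icc (0:ℝ) T, |y t| ≤ 1) ∧
  (∀ᵐ t ∂(volume.restrict (Ioo (0:ℝ) T)),
    ∀ z ∈ Icc (-1:ℝ) 1, (relayG ρ₁ ρ₂ k (u t) - y' t) * (z - y t) ≤ 0)

/-- Self-convolution identity: `(∫₀ᵗ f)² = 2 ∫₀ᵗ f(s)·(∫₀ˢ f) ds` for integrable `f`. -/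
theorem sq_integral_eq_two_mul (t : ℝ) (ht : 0 < t) (f : ℝ → ℝ)
    (hfi : IntegrableOn f (Ioc 0 t)) :
    (∫ s in Ioc (0:ℝ) t, f s) * (∫ s in Ioc (0:ℝ) t, f s)
      = 2 * ∫ s in Ioc (0:ℝ) t, f s * (∫ r in Ioc (0:ℝ) s, f r) := by
  set W : ℝ → ℝ := fun s => ∫ r in Ioc (0:ℝ) s, f r with hW
  have hWcont : ContinuousOn W (Icc 0 t) :=
    intervalIntegral.continuousOn_primitive (by rwa [integrableOn_Icc_iff_integrableOn_Ioc])
  obtain ⟨C, hC⟩ : ∃ C, ∀ s ∈ Icc (0:ℝ) t, ‖W s‖ ≤ C := by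
    obtain ⟨C, hC⟩ := (isCompact_Icc.image_of_continuousOn hWcont.norm).bddAbove
    exact ⟨C, fun s hs => hC ⟨s, hs, rfl⟩⟩
  have hWm : AEStronglyMeasurable W (volume.restrict (Ioc (0:ℝ) t)) :=
    (hWcont.mono Ioc_subset_Icc_self).aestronglyMeasurable measurableSet_Ioc
  have hA : Integrable (fun s => W s * f s) (volume.restrict (Ioc (0:ℝ) t)) := by
    refine hfi.bdd_mul (c := C) hWm ?_
    filter_upwards [ae_restrict_mem measurableSet_Ioc] with s hs
    exact hC s (Ioc_subset_Icc_self hs)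
  have hWsplit : ∀ s ∈ Ioc (0:ℝ) t, W t = W s + ∫ r in Ioc s t, f r := by
    intro s hs
    have h1 : IntegrableOn f (Ioc 0 s) := hfi.mono_set (Ioc_subset_Ioc_right hs.2)
    have h2 : IntegrableOn f (Ioc s t) := hfi.mono_set (Ioc_subset_Ioc_left hs.1.le)
    simp only [hW]
    rw [← Ioc_union_Ioc_eq_Ioc hs.1.le hs.2,
      setIntegral_union (Ioc_disjoint_Ioc_of_le le_rfl) measurableSet_Ioc h1 h2]
  -- the square as a double integral, split into lower and upper triangles
  have hA' : Integrable (fun s => f s * W s) (volume.restrict (Ioc (0:ℝ) t)) := by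
    simpa [mul_comm] using hA
  have hB : Integrable (fun s => f s * (∫ r in Ioc s t, f r))
      (volume.restrict (Ioc (0:ℝ) t)) := by
    have hWt : Integrable (fun s => f s * W t) (volume.restrict (Ioc (0:ℝ) t)) :=
      hfi.mul_const _
    have heq : ∀ s ∈ Ioc (0:ℝ) t, f s * (∫ r in Ioc s t, f r) = f s * W t - f s * W s := by
      intro s hs; rw [hWsplit s hs]; ring
    exact (hWt.sub hA').congr
      ((ae_restrict_mem measurableSet_Ioc).mono fun s hs => (heq s hs).symm)
  have step1 : W t * W t
      = (∫ s in Ioc (0:ℝ) t, f s * W s) + ∫ s in Ioc (0:ℝ) t, f s * (∫ r in Ioc s t, f r) := by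
    have h0 : W t * W t = ∫ s in Ioc (0:ℝ) t, f s * W t := by
      rw [integral_mul_const]
    rw [h0, ← integral_add hA' hB]
    refine setIntegral_congr_fun measurableSet_Ioc fun s hs => ?_
    rw [hWsplit s hs]; ring
  -- Fubini: the upper triangle integral equals the lower triangle integral
  have step2 : (∫ s in Ioc (0:ℝ) t, f s * (∫ r in Ioc s t, f r))
      = ∫ s in Ioc (0:ℝ) t, f s * W s := by
    set G : ℝ → ℝ → ℝ := fun s r => if s < r then f s * f r else 0 with hG
    have hGint : Integrable (Function.uncurry G)
        ((volume.restrict (Ioc (0:ℝ) t)).prod (volume.restrict (Ioc (0:ℝ) t))) := by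
      have hF : Integrable (fun p : ℝ × ℝ => f p.1 * f p.2)
          ((volume.restrict (Ioc (0:ℝ) t)).prod (volume.restrict (Ioc (0:ℝ) t))) :=
        hfi.mul_prod hfi
      have hset : MeasurableSet {p : ℝ × ℝ | p.1 < p.2} :=
        measurableSet_lt measurable_fst measurable_snd
      have : Function.uncurry G
          = {p : ℝ × ℝ | p.1 < p.2}.indicator (fun p => f p.1 * f p.2) := by
        funext p
        simp [Function.uncurry, hG, Set.indicator_apply]
      rw [this]
      exact hF.indicator hset
    have lhs_eq : (∫ s in Ioc (0:ℝ) t, f s * (∫ r in Ioc s t, f r))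
        = ∫ s in Ioc (0:ℝ) t, ∫ r in Ioc (0:ℝ) t, G s r := by
      refine setIntegral_congr_fun measurableSet_Ioc fun s hs => ?_
      have : ∀ r, G s r = (Ioi s).indicator (fun r => f s * f r) r := by
        intro r; simp [hG, Set.indicator_apply, mem_Ioi]
      rw [show (fun r => G s r) = fun r => (Ioi s).indicator (fun r => f s * f r) r from
        funext this]
      rw [integral_indicator measurableSet_Ioi, Measure.restrict_restrict measurableSet_Ioi]
      rw [show Ioi s ∩ Ioc 0 t = Ioc s t by
        ext r; simp only [mem_inter_iff, mem_Ioi, mem_Ioc]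
        constructor
        · rintro ⟨h1, _, h3⟩; exact ⟨h1, h3⟩
        · rintro ⟨h1, h2⟩; exact ⟨h1, hs.1.trans h1, h2⟩]
      rw [integral_const_mul]
    have rhs_eq : (∫ r in Ioc (0:ℝ) t, ∫ s in Ioc (0:ℝ) t, G s r)
        = ∫ s in Ioc (0:ℝ) t, f s * W s := by
      refine setIntegral_congr_fun measurableSet_Ioc fun r hr => ?_
      have : ∀ s, G s r = (Iio r).indicator (fun s => f s * f r) s := by
        intro s; simp [hG, Set.indicator_apply, mem_Iio]
      rw [show (fun s => G s r) = fun s => (Iio r).indicator (fun s => f s * f r) s from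
        funext this]
      rw [integral_indicator measurableSet_Iio, Measure.restrict_restrict measurableSet_Iio]
      rw [show Iio r ∩ Ioc 0 t = Ioo 0 r by
        ext s; simp only [mem_inter_iff, mem_Iio, mem_Ioo, mem_Ioc]
        constructor
        · rintro ⟨h1, h2, _⟩; exact ⟨h2, h1⟩
        · rintro ⟨h1, h2⟩; exact ⟨h2, h1, (h2.le.trans hr.2)⟩]
      rw [integral_mul_const, ← integral_Ioc_eq_integral_Ioo]
      exact mul_comm _ _
    rw [lhs_eq, integral_integral_swap hGint, rhs_eq]
  rw [show (∫ s in Ioc (0:ℝ) t, f s) = W t from rfl, step1, step2]; ring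

/-- Uniqueness of the dynamic relay (Theorem 2.1, uniqueness part). -/
theorem dyn_relay_uniqueness (T ρ₁ ρ₂ k : ℝ) (hT : 0 < T) (hρ : ρ₁ < ρ₂) (hk : 0 < k)
    (u : ℝ → ℝ) (hu : MemLp u 2 (volume.restrict (Ioc (0:ℝ) T)))
    (ξ : ℝ) (hξ : ξ ∈ Icc (-1:ℝ) 1)
    (y₁ y₁' y₂ y₂' : ℝ → ℝ)
    (h₁ : IsDynRelay T ρ₁ ρ₂ k u ξ y₁ y₁')
    (h₂ : IsDynRelay T ρ₁ ρ₂ k u ξ y₂ y₂') :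
    ∀ t ∈ Icc (0:ℝ) T, y₁ t = y₂ t := by
  obtain ⟨hm₁, h01, hftc₁, hb₁, hvi₁⟩ := h₁
  obtain ⟨hm₂, h02, hftc₂, hb₂, hvi₂⟩ := h₂
  set f : ℝ → ℝ := fun s => y₁' s - y₂' s with hf
  have hfinT : IsFiniteMeasure (volume.restrict (Ioc (0:ℝ) T)) :=
    ⟨by rw [Measure.restrict_apply_univ]; exact measure_Ioc_lt_top⟩
  have hi₁ : IntegrableOn y₁' (Ioc (0:ℝ) T) :=
    hm₁.integrable (by norm_num)
  have hi₂ : IntegrableOn y₂' (Ioc (0:ℝ) T) :=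
    hm₂.integrable (by norm_num)
  have hfi : IntegrableOn f (Ioc (0:ℝ) T) := hi₁.sub hi₂
  -- the difference equals the primitive of f
  have hw : ∀ s ∈ Icc (0:ℝ) T, y₁ s - y₂ s = ∫ r in Ioc (0:ℝ) s, f r := by
    intro s hs
    have hii₁ : IntervalIntegrable y₁' volume 0 s := by
      rw [intervalIntegrable_iff_integrableOn_Ioc_of_le hs.1]
      exact hi₁.mono_set (Ioc_subset_Ioc_right hs.2)
    have hii₂ : IntervalIntegrable y₂' volume 0 s := by
      rw [intervalIntegrable_iff_integrableOn_Ioc_of_le hs.1]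
      exact hi₂.mono_set (Ioc_subset_Ioc_right hs.2)
    rw [hftc₁ s hs, hftc₂ s hs]
    rw [show ξ + (∫ r in (0:ℝ)..s, y₁' r) - (ξ + ∫ r in (0:ℝ)..s, y₂' r)
        = (∫ r in (0:ℝ)..s, y₁' r) - ∫ r in (0:ℝ)..s, y₂' r by ring]
    rw [← intervalIntegral.integral_sub hii₁ hii₂, intervalIntegral.integral_of_le hs.1]
  -- key a.e. inequality: f · (y₁ - y₂) ≤ 0
  have hkey : ∀ᵐ s ∂(volume.restrict (Ioc (0:ℝ) T)), f s * (y₁ s - y₂ s) ≤ 0 := by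
    rw [← Measure.restrict_congr_set Ioo_ae_eq_Ioc]
    filter_upwards [hvi₁, hvi₂, ae_restrict_mem measurableSet_Ioo] with s hs₁ hs₂ hs
    have hsI : s ∈ Icc (0:ℝ) T := ⟨hs.1.le, hs.2.le⟩
    have hy₁ : y₁ s ∈ Icc (-1:ℝ) 1 := abs_le.1 (hb₁ s hsI)
    have hy₂ : y₂ s ∈ Icc (-1:ℝ) 1 := abs_le.1 (hb₂ s hsI)
    have A := hs₁ (y₂ s) hy₂
    have B := hs₂ (y₁ s) hy₁
    show (y₁' s - y₂' s) * (y₁ s - y₂ s) ≤ 0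
    have hE : (y₁' s - y₂' s) * (y₁ s - y₂ s)
        = (relayG ρ₁ ρ₂ k (u s) - y₁' s) * (y₂ s - y₁ s)
          + (relayG ρ₁ ρ₂ k (u s) - y₂' s) * (y₁ s - y₂ s) := by ring
    linarith [A, B, hE]
  -- conclude
  intro t ht
  rcases eq_or_lt_of_le ht.1 with h0 | h0
  · rw [← h0, h01, h02]
  have hfit : IntegrableOn f (Ioc (0:ℝ) t) := hfi.mono_set (Ioc_subset_Ioc_right ht.2)
  have hsq := sq_integral_eq_two_mul t h0 f hfit
  have hneg : (∫ s in Ioc (0:ℝ) t, f s * (∫ r in Ioc (0:ℝ) s, f r)) ≤ 0 := by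
    refine integral_nonpos_of_ae ?_
    have hsub : ∀ᵐ s ∂(volume.restrict (Ioc (0:ℝ) t)), f s * (y₁ s - y₂ s) ≤ 0 :=
      ae_restrict_of_ae_restrict_of_subset (Ioc_subset_Ioc_right ht.2) hkey
    filter_upwards [hsub, ae_restrict_mem measurableSet_Ioc] with s hs hsmem
    rwa [← hw s ⟨hsmem.1.le, hsmem.2.trans ht.2⟩]
  have hWt0 : (∫ s in Ioc (0:ℝ) t, f s) = 0 := by
    have h1 : (∫ s in Ioc (0:ℝ) t, f s) * (∫ s in Ioc (0:ℝ) t, f s) ≤ 0 := by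
      rw [hsq]; linarith
    have h2 := mul_self_nonneg (∫ s in Ioc (0:ℝ) t, f s)
    exact mul_self_eq_zero.1 (le_antisymm h1 h2)
  have := hw t ht
  rw [hWt0] at this
  linarith
end

section
/- Characterization of the Lagrange multiplier (Lemma after Theorem 2.1, eq. (2.13)): Let y be a dynamic relay solution for (u, ξ) and q(t) := g(u(t)) − y'(t). Then for a.e. t ∈ (0,T): if −1 < y(t) < 1 then q(t) = 0; if y(t) = −1 then q(t) = min(g(u(t)), 0); and if y(t) = 1 then q(t) = max(g(u(t)), 0). In other words, q(t) is the projection of g(u(t)) onto the set ∂χ_{[−1,1]}(y(t)). -/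
/-!
Testing the variational inequality with `z = ±1` puts `q(t)` in the normal cone of `[-1, 1]`
at `y(t)`: `q = 0` inside, `q ≤ 0` at `-1`, `q ≥ 0` at `1`. At the endpoints `y'(t) = 0` for
a.e. `t`, because `y` is differentiable a.e. (Lebesgue differentiation) and all but countably many
points of a level set accumulate on it from the right, which forces the derivative there to vanish.
So `q = g(u)` on `{y = ±1}`, and its sign turns it into `min (g u) 0` resp. `max (g u) 0`.
-/

open MeasureTheory Set

open Filter Topology

section

variable {E : Type*} [NormedAddCommGroup E] [NormedSpace ℝ E]

theorem ae_eq_zero_of_hasDerivAt_of_apply_eq {f f' : ℝ → E} (c : E) :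
    ∀ᵐ x, f x = c → HasDerivAt f (f' x) x → f' x = 0 := by
  set s := f ⁻¹' {c}
  filter_upwards [(countable_setOfPred_isolated_right_within (s := s)).ae_notMem volume]
    with x hx hfx hf
  have hacc : AccPt x (𝓟 (s ∩ Ioi x)) := by
    rw [accPt_principal_iff_nhdsWithin, sdiff_singleton_eq_self fun h => lt_irrefl x h.2]
    exact ⟨fun hbot => hx ⟨hfx, hbot⟩⟩
  have hconst : HasDerivWithinAt f 0 (s ∩ Ioi x) x :=
    (hasDerivWithinAt_const x _ c).congr (fun z hz => hz.1) hfx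
  exact hacc.uniqueDiffWithinAt.eq_deriv _ hf.hasDerivWithinAt hconst

theorem ae_hasDerivAt_of_eq_add_integral [CompleteSpace E] {y y' : ℝ → E} {a b : ℝ} {ξ : E}
    (hy' : IntegrableOn y' (Ioc a b)) (hy : ∀ t ∈ Icc a b, y t = ξ + ∫ s in a..t, y' s) :
    ∀ᵐ t ∂volume.restrict (Ioo a b), HasDerivAt y (y' t) t := by
  rcases le_or_gt a b with hab | hab
  · have hint : IntervalIntegrable y' volume a b :=
      (intervalIntegrable_iff_integrableOn_Ioc_of_le hab).2 hy'
    filter_upwards [ae_restrict_of_ae hint.ae_hasDerivAt_integral,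
      ae_restrict_mem measurableSet_Ioo] with t ht hmem
    have hty : y =ᶠ[𝓝 t] fun x => ξ + ∫ s in a..x, y' s :=
      eventually_of_mem (Ioo_mem_nhds hmem.1 hmem.2) fun x hx => hy x (Ioo_subset_Icc_self hx)
    rw [uIcc_of_le hab] at ht
    exact ((ht (Ioo_subset_Icc_self hmem) a (left_mem_Icc.2 hab)).const_add ξ).congr_of_eventuallyEq
      hty
  · simp [Ioo_eq_empty hab.not_gt]

end

theorem normalCone_Icc_neg_one_one_cases {q y : ℝ} (h : ∀ z ∈ Icc (-1:ℝ) 1, q * (z - y) ≤ 0) :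
    (-1 < y ∧ y < 1 → q = 0) ∧ (y = -1 → q ≤ 0) ∧ (y = 1 → 0 ≤ q) := by
  have h₁ := h 1 (by norm_num)
  have h₂ := h (-1) (by norm_num)
  refine ⟨fun ⟨hl, hu⟩ => ?_, fun hy => ?_, fun hy => ?_⟩
  · nlinarith
  · subst hy; linarith
  · subst hy; linarith

theorem dyn_relay_multiplier_characterization_general (T ρ₁ ρ₂ k : ℝ)
    (u : ℝ → ℝ)
    (ξ : ℝ)
    (y y' : ℝ → ℝ) (hy : IsDynRelay T ρ₁ ρ₂ k u ξ y y') :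
    ∀ᵐ t ∂(volume.restrict (Ioo (0:ℝ) T)),
      ((-1 < y t ∧ y t < 1) → relayG ρ₁ ρ₂ k (u t) - y' t = 0) ∧
      (y t = -1 → relayG ρ₁ ρ₂ k (u t) - y' t = min (relayG ρ₁ ρ₂ k (u t)) 0) ∧
      (y t = 1 → relayG ρ₁ ρ₂ k (u t) - y' t = max (relayG ρ₁ ρ₂ k (u t)) 0) := by
  obtain ⟨hy'L2, -, hyFTC, -, hVI⟩ := hy
  filter_upwards [hVI, ae_hasDerivAt_of_eq_add_integral (hy'L2.integrable one_le_two) hyFTC,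
    ae_restrict_of_ae (ae_eq_zero_of_hasDerivAt_of_apply_eq (f' := y') 1),
    ae_restrict_of_ae (ae_eq_zero_of_hasDerivAt_of_apply_eq (f' := y') (-1))]
    with t hq hder hflat_pos hflat_neg
  obtain ⟨hinterior, hlower, hupper⟩ := normalCone_Icc_neg_one_one_cases hq
  refine ⟨hinterior, fun hyt => ?_, fun hyt => ?_⟩
  · rw [hflat_neg hyt hder, sub_zero] at hlower ⊢
    exact (min_eq_left (hlower hyt)).symm
  · rw [hflat_pos hyt hder, sub_zero] at hupper ⊢
    exact (max_eq_left (hupper hyt)).symm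

/-- Characterization of the Lagrange multiplier `q(t) = g(u(t)) − y'(t)` (eq. (2.13)):
`q` is the projection of `g(u(t))` onto `∂χ_{[−1,1]}(y(t))`. -/
theorem dyn_relay_multiplier_characterization (T ρ₁ ρ₂ k : ℝ)
    (hT : 0 < T) (hρ : ρ₁ < ρ₂) (hk : 0 < k)
    (u : ℝ → ℝ) (hu : MemLp u 2 (volume.restrict (Ioc (0:ℝ) T)))
    (ξ : ℝ) (hξ : ξ ∈ Icc (-1:ℝ) 1)
    (y y' : ℝ → ℝ) (hy : IsDynRelay T ρ₁ ρ₂ k u ξ y y') :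
    ∀ᵐ t ∂(volume.restrict (Ioo (0:ℝ) T)),
      ((-1 < y t ∧ y t < 1) → relayG ρ₁ ρ₂ k (u t) - y' t = 0) ∧
      (y t = -1 → relayG ρ₁ ρ₂ k (u t) - y' t = min (relayG ρ₁ ρ₂ k (u t)) 0) ∧
      (y t = 1 → relayG ρ₁ ρ₂ k (u t) - y' t = max (relayG ρ₁ ρ₂ k (u t)) 0) :=
  dyn_relay_multiplier_characterization_general T ρ₁ ρ₂ k u ξ y y' hy
end

section
/- Derivative characterization of the dynamic relay (Corollary, eq. (2.14)): Let y be a dynamic relay solution for (u, ξ). Then for a.e. t ∈ (0,T): if −1 < y(t) < 1 then y'(t) = g(u(t)); if y(t) = −1 then y'(t) = max(g(u(t)), 0); and if y(t) = 1 then y'(t) = min(g(u(t)), 0). -/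
open MeasureTheory Set

/-!
An `H¹` function is differentiable almost everywhere with derivative `y'` (Lebesgue
differentiation). At a point where `y` touches `±1` it has a local extremum, so `y'` vanishes
there; at the remaining points the variational inequality, tested with `z = ±1`, forces
`y' = g(u)` in the interior and fixes the sign of `g(u)` on the boundary.
-/

open Filter Topology

lemma ae_hasDerivAt_of_eqOn_integral {E : Type*} [NormedAddCommGroup E] [NormedSpace ℝ E]
    [CompleteSpace E] {f F : ℝ → E} {a b : ℝ} (c : E) (hf : IntegrableOn f (Ioc a b))
    (hF : ∀ t ∈ Icc a b, F t = c + ∫ s in a..t, f s) :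
    ∀ᵐ t ∂(volume.restrict (Ioo a b)), HasDerivAt F (f t) t := by
  rcases le_or_gt b a with hba | hab
  · simp [Ioo_eq_empty hba.not_gt]
  have hf' : IntervalIntegrable f volume a b :=
    (intervalIntegrable_iff_integrableOn_Ioc_of_le hab.le).2 hf
  filter_upwards [ae_restrict_of_ae hf'.ae_hasDerivAt_integral, ae_restrict_mem measurableSet_Ioo]
    with t hderiv ht
  rw [uIcc_of_le hab.le] at hderiv
  have hF_nhds : F =ᶠ[𝓝 t] fun x ↦ c + ∫ s in a..x, f s :=
    eventually_of_mem (Icc_mem_nhds ht.1 ht.2) hF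
  exact ((hderiv (Ioo_subset_Icc_self ht) a (left_mem_Icc.2 hab.le)).const_add c
    ).congr_of_eventuallyEq hF_nhds

lemma HasDerivAt.eq_zero_of_eventually_mem_Icc {y : ℝ → ℝ} {d t a b : ℝ}
    (hy : HasDerivAt y d t) (hbd : ∀ᶠ x in 𝓝 t, y x ∈ Icc a b) (ht : y t = a ∨ y t = b) :
    d = 0 := by
  rcases ht with hta | htb
  · exact IsLocalMin.hasDerivAt_eq_zero (hbd.mono fun x hx ↦ hta ▸ hx.1) hy
  · exact IsLocalMax.hasDerivAt_eq_zero (hbd.mono fun x hx ↦ htb ▸ hx.2) hy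

lemma rate_cases_of_variational_ineq {g d x : ℝ}
    (hvi : ∀ z ∈ Icc (-1:ℝ) 1, (g - d) * (z - x) ≤ 0) (hd : x = -1 ∨ x = 1 → d = 0) :
    ((-1 < x ∧ x < 1) → d = g) ∧ (x = -1 → d = max g 0) ∧ (x = 1 → d = min g 0) := by
  have hup := hvi 1 (right_mem_Icc.2 (by norm_num))
  have hdown := hvi (-1) (left_mem_Icc.2 (by norm_num))
  refine ⟨fun ⟨hlo, hhi⟩ ↦ ?_, fun hx ↦ ?_, fun hx ↦ ?_⟩
  · nlinarith
  · rw [hd (Or.inl hx), max_eq_right]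
    rw [hd (Or.inl hx), hx] at hup
    linarith
  · rw [hd (Or.inr hx), min_eq_right]
    rw [hd (Or.inr hx), hx] at hdown
    linarith

theorem dyn_relay_derivative_characterization_general (T ρ₁ ρ₂ k : ℝ)
    (u : ℝ → ℝ) (ξ : ℝ) (y y' : ℝ → ℝ) (hy : IsDynRelay T ρ₁ ρ₂ k u ξ y y') :
    ∀ᵐ t ∂(volume.restrict (Ioo (0:ℝ) T)),
      ((-1 < y t ∧ y t < 1) → y' t = relayG ρ₁ ρ₂ k (u t)) ∧
      (y t = -1 → y' t = max (relayG ρ₁ ρ₂ k (u t)) 0) ∧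
      (y t = 1 → y' t = min (relayG ρ₁ ρ₂ k (u t)) 0) := by
  obtain ⟨hL2, -, hFTC, hbd, hVI⟩ := hy
  filter_upwards [hVI, ae_hasDerivAt_of_eqOn_integral ξ (hL2.integrable one_le_two) hFTC,
    ae_restrict_mem measurableSet_Ioo] with t hvi hderiv ht
  have hbd_nhds : ∀ᶠ x in 𝓝 t, y x ∈ Icc (-1) 1 :=
    eventually_of_mem (Icc_mem_nhds ht.1 ht.2) fun x hx ↦ abs_le.1 (hbd x hx)
  exact rate_cases_of_variational_ineq hvi (hderiv.eq_zero_of_eventually_mem_Icc hbd_nhds)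

/-- Derivative characterization of the dynamic relay (Corollary, eq. (2.14)). -/
theorem dyn_relay_derivative_characterization (T ρ₁ ρ₂ k : ℝ)
    (hT : 0 < T) (hρ : ρ₁ < ρ₂) (hk : 0 < k)
    (u : ℝ → ℝ) (hu : MemLp u 2 (volume.restrict (Ioc (0:ℝ) T)))
    (ξ : ℝ) (hξ : ξ ∈ Icc (-1:ℝ) 1)
    (y y' : ℝ → ℝ) (hy : IsDynRelay T ρ₁ ρ₂ k u ξ y y') :
    ∀ᵐ t ∂(volume.restrict (Ioo (0:ℝ) T)),
      ((-1 < y t ∧ y t < 1) → y' t = relayG ρ₁ ρ₂ k (u t)) ∧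
      (y t = -1 → y' t = max (relayG ρ₁ ρ₂ k (u t)) 0) ∧
      (y t = 1 → y' t = min (relayG ρ₁ ρ₂ k (u t)) 0) :=
  dyn_relay_derivative_characterization_general T ρ₁ ρ₂ k u ξ y y' hy
end

section
/- Order preservation of the dynamic relay (Lemma 2.2): Let u₁, u₂ ∈ L²(0,T), ξ₁, ξ₂ ∈ [−1,1] and k > 0. If u₁(t) ≤ u₂(t) for a.e. t ∈ [0,T] and ξ₁ ≤ ξ₂, and y₁, y₂ are the dynamic relay solutions for (u₁, ξ₁) and (u₂, ξ₂) respectively, then y₁(t) ≤ y₂(t) for all t ∈ [0,T]. -/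
/-!
Let `w = y₁ - y₂`. Wherever `y₂ < y₁`, testing the variational inequality of `y₁` with `z = y₂`
and that of `y₂` with `z = y₁` gives `y₁' ≤ g(u₁) ≤ g(u₂) ≤ y₂'`, so `w' ≤ 0` a.e. where `w > 0`.
If `w(t) > 0` at some `t`, take the last time `s < t` with `w(s) ≤ 0`; then
`w(t) - w(s) = ∫ₛᵗ w' ≤ 0`, a contradiction.
-/

open MeasureTheory Set

lemma relayG_monotone (ρ₁ ρ₂ : ℝ) {k : ℝ} (hk : 0 ≤ k) : Monotone (relayG ρ₁ ρ₂ k) := by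
  intro a b hab
  have h₁ : max (a - ρ₂) 0 ≤ max (b - ρ₂) 0 := max_le_max (by linarith) le_rfl
  have h₂ : max (ρ₁ - b) 0 ≤ max (ρ₁ - a) 0 := max_le_max (by linarith) le_rfl
  unfold relayG
  nlinarith [mul_le_mul_of_nonneg_left h₁ hk, mul_le_mul_of_nonneg_left h₂ hk]

lemma ContinuousOn.exists_nonpos_forall_pos_Ioc {w : ℝ → ℝ} {a t : ℝ} (hat : a ≤ t)
    (hw : ContinuousOn w (Icc a t)) (ha : w a ≤ 0) (ht : 0 < w t) :
    ∃ s ∈ Ico a t, w s ≤ 0 ∧ ∀ r ∈ Ioc s t, 0 < w r := by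
  set S := Icc a t ∩ w ⁻¹' Iic 0
  have hS_closed : IsClosed S := hw.preimage_isClosed_of_isClosed isClosed_Icc isClosed_Iic
  have hS_bdd : BddAbove S := ⟨t, fun r hr => hr.1.2⟩
  have hs : sSup S ∈ S := hS_closed.csSup_mem ⟨a, ⟨le_rfl, hat⟩, ha⟩ hS_bdd
  refine ⟨sSup S, ⟨hs.1.1, lt_of_le_of_ne hs.1.2 fun h => ?_⟩, hs.2, fun r hr => ?_⟩
  · exact (not_le.2 ht) (h ▸ hs.2)
  · by_contra hr_nonpos
    have hrS : r ∈ S := ⟨⟨hs.1.1.trans hr.1.le, hr.2⟩, not_lt.1 hr_nonpos⟩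
    exact (not_le.2 hr.1) (le_csSup hS_bdd hrS)

section Comparison

variable {w w' : ℝ → ℝ} {a b : ℝ}

lemma intervalIntegrable_of_integrableOn_Icc (hw' : IntegrableOn w' (Icc a b)) {s t : ℝ}
    (hs : a ≤ s) (hst : s ≤ t) (ht : t ≤ b) : IntervalIntegrable w' volume s t :=
  (hw'.mono_set (uIcc_of_le hst ▸ Icc_subset_Icc hs ht)).intervalIntegrable

lemma continuousOn_of_eq_add_primitive (hw' : IntegrableOn w' (Icc a b))
    (hrep : ∀ t ∈ Icc a b, w t = w a + ∫ s in a..t, w' s) : ContinuousOn w (Icc a b) := by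
  rcases le_or_gt a b with hab | hab
  · have hprim := intervalIntegral.continuousOn_primitive_interval (uIcc_of_le hab ▸ hw')
    rw [uIcc_of_le hab] at hprim
    exact (continuousOn_const.add hprim).congr hrep
  · simp [Icc_eq_empty_of_lt hab]

lemma nonpos_of_deriv_nonpos_where_pos (hw' : IntegrableOn w' (Icc a b))
    (hrep : ∀ t ∈ Icc a b, w t = w a + ∫ s in a..t, w' s) (ha : w a ≤ 0)
    (hderiv : ∀ᵐ t ∂(volume.restrict (Ioo a b)), 0 < w t → w' t ≤ 0) :
    ∀ t ∈ Icc a b, w t ≤ 0 := by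
  intro t ht
  by_contra! hwt
  have hcont : ContinuousOn w (Icc a t) :=
    (continuousOn_of_eq_add_primitive hw' hrep).mono (Icc_subset_Icc le_rfl ht.2)
  obtain ⟨s, hs, hws, hpos⟩ := hcont.exists_nonpos_forall_pos_Ioc ht.1 ha hwt
  have hincr : w t - w s = ∫ r in s..t, w' r := by
    rw [hrep t ht, hrep s ⟨hs.1, hs.2.le.trans ht.2⟩, add_sub_add_left_eq_sub]
    exact intervalIntegral.integral_interval_sub_left
      (intervalIntegrable_of_integrableOn_Icc hw' le_rfl ht.1 ht.2)
      (intervalIntegrable_of_integrableOn_Icc hw' le_rfl hs.1 (hs.2.le.trans ht.2))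
  have hint : ∫ r in s..t, w' r ≤ 0 := by
    rw [intervalIntegral.integral_of_le hs.2.le, integral_Ioc_eq_integral_Ioo]
    refine integral_nonpos_of_ae ?_
    filter_upwards [ae_restrict_of_ae_restrict_of_subset (Ioo_subset_Ioo hs.1 ht.2) hderiv,
      ae_restrict_mem measurableSet_Ioo] with r hr hrmem
    exact hr (hpos r ⟨hrmem.1, hrmem.2.le⟩)
  linarith

end Comparison

namespace IsDynRelay

variable {T ρ₁ ρ₂ k ξ ξ₁ ξ₂ : ℝ} {u u₁ u₂ y y' y₁ y₁' y₂ y₂' : ℝ → ℝ}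

lemma integrableOn_Icc (h : IsDynRelay T ρ₁ ρ₂ k u ξ y y') : IntegrableOn y' (Icc 0 T) :=
  (integrableOn_Icc_iff_integrableOn_Ioc).2 (h.1.integrable one_le_two)

lemma mem_Icc (h : IsDynRelay T ρ₁ ρ₂ k u ξ y y') {t : ℝ} (ht : t ∈ Icc 0 T) :
    y t ∈ Icc (-1) 1 :=
  abs_le.1 (h.2.2.2.1 t ht)

lemma ae_deriv_le (h : IsDynRelay T ρ₁ ρ₂ k u ξ y y') :
    ∀ᵐ t ∂(volume.restrict (Ioo 0 T)), ∀ z ∈ Icc (-1) 1, z < y t →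
      y' t ≤ relayG ρ₁ ρ₂ k (u t) := by
  filter_upwards [h.2.2.2.2] with t ht z hz hzy
  exact sub_nonneg.1 (nonneg_of_mul_nonpos_left (ht z hz) (sub_neg.2 hzy))

lemma ae_le_deriv (h : IsDynRelay T ρ₁ ρ₂ k u ξ y y') :
    ∀ᵐ t ∂(volume.restrict (Ioo 0 T)), ∀ z ∈ Icc (-1) 1, y t < z →
      relayG ρ₁ ρ₂ k (u t) ≤ y' t := by
  filter_upwards [h.2.2.2.2] with t ht z hz hyz
  exact sub_nonpos.1 (nonpos_of_mul_nonpos_left (ht z hz) (sub_pos.2 hyz))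

lemma ae_sub_deriv_nonpos (h₁ : IsDynRelay T ρ₁ ρ₂ k u₁ ξ₁ y₁ y₁')
    (h₂ : IsDynRelay T ρ₁ ρ₂ k u₂ ξ₂ y₂ y₂') (hk : 0 ≤ k)
    (hu : ∀ᵐ t ∂(volume.restrict (Ioo 0 T)), u₁ t ≤ u₂ t) :
    ∀ᵐ t ∂(volume.restrict (Ioo 0 T)), 0 < (y₁ - y₂) t → (y₁' - y₂') t ≤ 0 := by
  filter_upwards [h₁.ae_deriv_le, h₂.ae_le_deriv, hu, ae_restrict_mem measurableSet_Ioo]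
    with t h₁t h₂t hut ht hpos
  rw [Pi.sub_apply, sub_pos] at hpos
  have hy₁ := h₁t (y₂ t) (h₂.mem_Icc (Ioo_subset_Icc_self ht)) hpos
  have hy₂ := h₂t (y₁ t) (h₁.mem_Icc (Ioo_subset_Icc_self ht)) hpos
  have hg := relayG_monotone ρ₁ ρ₂ hk hut
  simp only [Pi.sub_apply]
  linarith

lemma sub_eq_add_primitive (h₁ : IsDynRelay T ρ₁ ρ₂ k u₁ ξ₁ y₁ y₁')
    (h₂ : IsDynRelay T ρ₁ ρ₂ k u₂ ξ₂ y₂ y₂') :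
    ∀ t ∈ Icc 0 T, (y₁ - y₂) t = (y₁ - y₂) 0 + ∫ s in 0..t, (y₁' - y₂') s := by
  intro t ht
  simp only [Pi.sub_apply]
  rw [h₁.2.2.1 t ht, h₂.2.2.1 t ht, h₁.2.1, h₂.2.1, intervalIntegral.integral_sub
    (intervalIntegrable_of_integrableOn_Icc h₁.integrableOn_Icc le_rfl ht.1 ht.2)
    (intervalIntegrable_of_integrableOn_Icc h₂.integrableOn_Icc le_rfl ht.1 ht.2)]
  ring

end IsDynRelay

theorem dyn_relay_order_preservation_general (T ρ₁ ρ₂ k : ℝ)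
    (hk : 0 < k)
    (u₁ u₂ : ℝ → ℝ)
    (ξ₁ ξ₂ : ℝ)
    (hule : ∀ᵐ t ∂(volume.restrict (Icc (0:ℝ) T)), u₁ t ≤ u₂ t) (hξle : ξ₁ ≤ ξ₂)
    (y₁ y₁' y₂ y₂' : ℝ → ℝ)
    (h₁ : IsDynRelay T ρ₁ ρ₂ k u₁ ξ₁ y₁ y₁')
    (h₂ : IsDynRelay T ρ₁ ρ₂ k u₂ ξ₂ y₂ y₂') :
    ∀ t ∈ Icc (0:ℝ) T, y₁ t ≤ y₂ t := by
  have hstart : (y₁ - y₂) 0 ≤ 0 := by simpa [h₁.2.1, h₂.2.1] using hξle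
  have hderiv := h₁.ae_sub_deriv_nonpos h₂ hk.le
    (ae_restrict_of_ae_restrict_of_subset Ioo_subset_Icc_self hule)
  intro t ht
  exact sub_nonpos.1 <| nonpos_of_deriv_nonpos_where_pos
    (h₁.integrableOn_Icc.sub h₂.integrableOn_Icc) (h₁.sub_eq_add_primitive h₂) hstart hderiv t ht

/-- Order preservation of the dynamic relay (Lemma 2.2). -/
theorem dyn_relay_order_preservation (T ρ₁ ρ₂ k : ℝ)
    (hT : 0 < T) (hρ : ρ₁ < ρ₂) (hk : 0 < k)
    (u₁ u₂ : ℝ → ℝ)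
    (hu₁ : MemLp u₁ 2 (volume.restrict (Ioc (0:ℝ) T)))
    (hu₂ : MemLp u₂ 2 (volume.restrict (Ioc (0:ℝ) T)))
    (ξ₁ ξ₂ : ℝ) (hξ₁ : ξ₁ ∈ Icc (-1:ℝ) 1) (hξ₂ : ξ₂ ∈ Icc (-1:ℝ) 1)
    (hule : ∀ᵐ t ∂(volume.restrict (Icc (0:ℝ) T)), u₁ t ≤ u₂ t) (hξle : ξ₁ ≤ ξ₂)
    (y₁ y₁' y₂ y₂' : ℝ → ℝ)
    (h₁ : IsDynRelay T ρ₁ ρ₂ k u₁ ξ₁ y₁ y₁')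
    (h₂ : IsDynRelay T ρ₁ ρ₂ k u₂ ξ₂ y₂ y₂') :
    ∀ t ∈ Icc (0:ℝ) T, y₁ t ≤ y₂ t :=
  dyn_relay_order_preservation_general T ρ₁ ρ₂ k hk u₁ u₂ ξ₁ ξ₂ hule hξle y₁ y₁' y₂ y₂' h₁ h₂
end

section
/- Lipschitz continuity of the dynamic relay (Lemma 2.3): Let k > 0, u₁, u₂ ∈ L²(0,T), ξ₁, ξ₂ ∈ [−1,1], and let y₁, y₂ be the dynamic relay solutions for (u₁, ξ₁) and (u₂, ξ₂) respectively. Then max_{t∈[0,T]} |y₁(t) − y₂(t)| ≤ e^{T/2}·( |ξ₁ − ξ₂| + k·‖u₁ − u₂‖_{L²(0,T)} ). -/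
/-!
Testing the variational inequality of each solution with the state of the other gives, a.e.,
`(y₁' - y₂') (y₁ - y₂) ≤ (g(u₁) - g(u₂)) (y₁ - y₂) ≤ k |u₁ - u₂| |y₁ - y₂|`, because `g` is
`k`-Lipschitz when `ρ₁ ≤ ρ₂`. As `y₁ - y₂` is absolutely continuous, `(y₁ - y₂)²` is the primitive
of `2 (y₁' - y₂') (y₁ - y₂)`, so by AM-GM `φ = (y₁ - y₂)²` satisfies
`φ t ≤ (ξ₁ - ξ₂)² + k² ‖u₁ - u₂‖² + ∫₀ᵗ φ`, and the integral Grönwall inequality bounds `φ t` by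
`((ξ₁ - ξ₂)² + k² ‖u₁ - u₂‖²) eᵀ`.
-/

open MeasureTheory Set

open Topology Filter

theorem relayG_sub_mem_Icc {ρ₁ ρ₂ k : ℝ} (hρ : ρ₁ ≤ ρ₂) (hk : 0 ≤ k) {a b : ℝ} (hab : b ≤ a) :
    relayG ρ₁ ρ₂ k a - relayG ρ₁ ρ₂ k b ∈ Icc 0 (k * (a - b)) := by
  unfold relayG
  constructor <;>
    rcases le_total (a - ρ₂) 0 with ha₂ | ha₂ <;> rcases le_total (b - ρ₂) 0 with hb₂ | hb₂ <;>
    rcases le_total (ρ₁ - a) 0 with ha₁ | ha₁ <;> rcases le_total (ρ₁ - b) 0 with hb₁ | hb₁ <;>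
    simp only [max_eq_right, max_eq_left, *] <;> nlinarith

theorem abs_relayG_sub_le {ρ₁ ρ₂ k : ℝ} (hρ : ρ₁ ≤ ρ₂) (hk : 0 ≤ k) (a b : ℝ) :
    |relayG ρ₁ ρ₂ k a - relayG ρ₁ ρ₂ k b| ≤ k * |a - b| := by
  rcases le_total b a with hab | hab
  · obtain ⟨hnonneg, hle⟩ := relayG_sub_mem_Icc hρ hk hab
    rwa [abs_of_nonneg hnonneg, abs_of_nonneg (sub_nonneg.2 hab)]
  · obtain ⟨hnonneg, hle⟩ := relayG_sub_mem_Icc hρ hk hab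
    rwa [abs_sub_comm, abs_of_nonneg hnonneg, abs_sub_comm, abs_of_nonneg (sub_nonneg.2 hab)]

theorem le_mul_exp_of_le_add_integral {φ : ℝ → ℝ} {A a b : ℝ} (hφ : ContinuousOn φ (Icc a b))
    (h : ∀ t ∈ Icc a b, φ t ≤ A + ∫ s in a..t, φ s) :
    ∀ t ∈ Icc a b, φ t ≤ A * Real.exp (t - a) := by
  intro t ht
  have huIcc : uIcc a b = Icc a b := uIcc_of_le (ht.1.trans ht.2)
  have hint : IntegrableOn φ (uIcc a b) := huIcc ▸ hφ.integrableOn_Icc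
  have hG : ContinuousOn (fun x => ∫ s in a..x, φ s) (Icc a b) :=
    huIcc ▸ intervalIntegral.continuousOn_primitive_interval hint
  have hG' (x : ℝ) (hx : x ∈ Ico a b) :
      HasDerivWithinAt (fun x => ∫ s in a..x, φ s) (φ x) (Ici x) x := by
    have hIcc : Icc a b ∈ 𝓝[>] x :=
      nhdsWithin_mono _ Ioi_subset_Ici_self (Icc_mem_nhdsGE_of_mem hx)
    refine intervalIntegral.integral_hasDerivWithinAt_right (t := Ioi x) ?_ ?_ ?_
    · exact (hint.mono_set <| uIcc_subset_uIcc_left <| huIcc ▸ Ico_subset_Icc_self hx)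
        |>.intervalIntegrable
    · exact (hφ.stronglyMeasurableAtFilter_nhdsWithin measurableSet_Icc x).filter_mono
        (nhdsWithin_le_of_mem hIcc)
    · exact (hφ x (Ico_subset_Icc_self hx)).mono_of_mem_nhdsWithin hIcc
  have hgronwall := le_gronwallBound_of_liminf_deriv_right_le hG
    (fun x hx r hr => (hG' x hx).liminf_right_slope_le hr) (δ := 0) (K := 1) (ε := A)
    (by simp) (fun x hx => by linarith [h x (Ico_subset_Icc_self hx)]) t ht
  simp only [gronwallBound_of_K_ne_0 one_ne_zero, one_mul, div_one, zero_mul, zero_add]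
    at hgronwall
  linarith [h t ht]

theorem sq_eq_sq_add_integral_of_eq_add_integral {w h : ℝ → ℝ} {a b : ℝ}
    (hh : IntervalIntegrable h volume a b) (hw : ∀ t ∈ uIcc a b, w t = w a + ∫ s in a..t, h s) :
    w b ^ 2 = w a ^ 2 + ∫ s in a..b, 2 * h s * w s := by
  set F : ℝ → ℝ := fun x => w a + ∫ s in a..x, h s
  have hF : AbsolutelyContinuousOnInterval F a b :=
    (LipschitzWith.const (w a)).lipschitzOnWith.absolutelyContinuousOnInterval.fun_add
      (hh.absolutelyContinuousOnInterval_intervalIntegral left_mem_uIcc)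
  have hderiv : ∀ᵐ x, x ∈ uIoc a b → deriv F x * F x + F x * deriv F x = 2 * h x * w x := by
    filter_upwards [hh.ae_hasDerivAt_integral] with x hx hxab
    have hx' := uIoc_subset_uIcc hxab
    have hFx : F x = w x := (hw x hx').symm
    rw [((hx hx' a left_mem_uIcc).const_add (w a)).deriv, hFx]
    ring
  have key := hF.integral_deriv_mul_eq_sub hF
  rw [intervalIntegral.integral_congr_ae hderiv] at key
  simp only [F, intervalIntegral.integral_same, add_zero, ← hw b right_mem_uIcc] at key
  linear_combination -key

namespace IsDynRelay

variable {T ρ₁ ρ₂ k ξ ξ₁ ξ₂ : ℝ} {u u₁ u₂ y y' y₁ y₁' y₂ y₂' : ℝ → ℝ}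

theorem intervalIntegrable_deriv (h : IsDynRelay T ρ₁ ρ₂ k u ξ y y') {t : ℝ}
    (ht : t ∈ Icc 0 T) : IntervalIntegrable y' volume 0 t :=
  (intervalIntegrable_iff_integrableOn_Ioc_of_le ht.1).2
    (IntegrableOn.mono_set (h.1.integrable one_le_two) (Ioc_subset_Ioc_right ht.2))

theorem continuousOn (h : IsDynRelay T ρ₁ ρ₂ k u ξ y y') (hT : 0 ≤ T) :
    ContinuousOn y (Icc 0 T) := by
  refine ContinuousOn.congr ?_ h.2.2.1
  rw [← uIcc_of_le hT]
  exact continuousOn_const.add <| intervalIntegral.continuousOn_primitive_interval'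
    (h.intervalIntegrable_deriv (right_mem_Icc.2 hT)) left_mem_uIcc

theorem sq_sub_eq (h₁ : IsDynRelay T ρ₁ ρ₂ k u₁ ξ₁ y₁ y₁') (h₂ : IsDynRelay T ρ₁ ρ₂ k u₂ ξ₂ y₂ y₂')
    {t : ℝ} (ht : t ∈ Icc 0 T) :
    (y₁ t - y₂ t) ^ 2 =
      (ξ₁ - ξ₂) ^ 2 + ∫ s in (0:ℝ)..t, 2 * (y₁' s - y₂' s) * (y₁ s - y₂ s) := by
  have hsub : uIcc 0 t ⊆ Icc 0 T := uIcc_of_le ht.1 ▸ Icc_subset_Icc_right ht.2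
  have hw : ∀ s ∈ uIcc 0 t, y₁ s - y₂ s = (y₁ 0 - y₂ 0) + ∫ r in (0:ℝ)..s, (y₁' r - y₂' r) := by
    intro s hs
    rw [intervalIntegral.integral_sub (h₁.intervalIntegrable_deriv (hsub hs))
      (h₂.intervalIntegrable_deriv (hsub hs)), h₁.2.2.1 s (hsub hs), h₂.2.2.1 s (hsub hs),
      h₁.2.1, h₂.2.1]
    ring
  rw [sq_eq_sq_add_integral_of_eq_add_integral ((h₁.intervalIntegrable_deriv ht).sub
    (h₂.intervalIntegrable_deriv ht)) hw, h₁.2.1, h₂.2.1]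

theorem ae_two_mul_sub_mul_sub_le (h₁ : IsDynRelay T ρ₁ ρ₂ k u₁ ξ₁ y₁ y₁')
    (h₂ : IsDynRelay T ρ₁ ρ₂ k u₂ ξ₂ y₂ y₂') (hρ : ρ₁ ≤ ρ₂) (hk : 0 ≤ k) :
    ∀ᵐ s ∂volume.restrict (Ioo 0 T),
      2 * (y₁' s - y₂' s) * (y₁ s - y₂ s) ≤ k ^ 2 * (u₁ s - u₂ s) ^ 2 + (y₁ s - y₂ s) ^ 2 := by
  filter_upwards [h₁.2.2.2.2, h₂.2.2.2.2, ae_restrict_mem measurableSet_Ioo] with s hq₁ hq₂ hs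
  have hsT : s ∈ Icc 0 T := Ioo_subset_Icc_self hs
  have hmono : (y₁' s - y₂' s) * (y₁ s - y₂ s) ≤
      (relayG ρ₁ ρ₂ k (u₁ s) - relayG ρ₁ ρ₂ k (u₂ s)) * (y₁ s - y₂ s) := by
    have hvi₁ := hq₁ (y₂ s) (abs_le.1 (h₂.2.2.2.1 s hsT))
    have hvi₂ := hq₂ (y₁ s) (abs_le.1 (h₁.2.2.2.1 s hsT))
    linarith
  have hlip : (relayG ρ₁ ρ₂ k (u₁ s) - relayG ρ₁ ρ₂ k (u₂ s)) * (y₁ s - y₂ s) ≤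
      k * |u₁ s - u₂ s| * |y₁ s - y₂ s| := by
    grw [← abs_relayG_sub_le hρ hk, ← abs_mul]
    exact le_abs_self _
  have hamgm := two_mul_le_add_sq (k * |u₁ s - u₂ s|) |y₁ s - y₂ s|
  rw [mul_pow, sq_abs, sq_abs] at hamgm
  linarith

theorem sq_sub_le_add_integral (h₁ : IsDynRelay T ρ₁ ρ₂ k u₁ ξ₁ y₁ y₁')
    (h₂ : IsDynRelay T ρ₁ ρ₂ k u₂ ξ₂ y₂ y₂') (hρ : ρ₁ ≤ ρ₂) (hk : 0 ≤ k)
    (hu₁ : MemLp u₁ 2 (volume.restrict (Ioc 0 T))) (hu₂ : MemLp u₂ 2 (volume.restrict (Ioc 0 T)))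
    {t : ℝ} (ht : t ∈ Icc 0 T) :
    (y₁ t - y₂ t) ^ 2 ≤ ((ξ₁ - ξ₂) ^ 2 + k ^ 2 * ∫ s in (0:ℝ)..T, (u₁ s - u₂ s) ^ 2) +
      ∫ s in (0:ℝ)..t, (y₁ s - y₂ s) ^ 2 := by
  have hT : 0 ≤ T := ht.1.trans ht.2
  have hIcc : uIcc 0 t ⊆ Icc 0 T := uIcc_of_le ht.1 ▸ Icc_subset_Icc_right ht.2
  have hw : ContinuousOn (fun s => y₁ s - y₂ s) (uIcc 0 t) :=
    ((h₁.continuousOn hT).sub (h₂.continuousOn hT)).mono hIcc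
  have hdu : IntervalIntegrable (fun s => (u₁ s - u₂ s) ^ 2) volume 0 T :=
    (intervalIntegrable_iff_integrableOn_Ioc_of_le hT).2 (hu₁.sub hu₂).integrable_sq
  have hdu' : IntervalIntegrable (fun s => (u₁ s - u₂ s) ^ 2) volume 0 t :=
    hdu.mono_set (uIcc_of_le hT ▸ hIcc)
  have hdw : IntervalIntegrable (fun s => (y₁ s - y₂ s) ^ 2) volume 0 t :=
    (hw.pow 2).intervalIntegrable
  have hae : ∀ᵐ s ∂volume.restrict (Icc 0 t),
      2 * (y₁' s - y₂' s) * (y₁ s - y₂ s) ≤ k ^ 2 * (u₁ s - u₂ s) ^ 2 + (y₁ s - y₂ s) ^ 2 := by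
    refine ae_mono ?_ (h₁.ae_two_mul_sub_mul_sub_le h₂ hρ hk)
    rw [Measure.restrict_congr_set Ioo_ae_eq_Icc]
    exact Measure.restrict_mono (Icc_subset_Icc_right ht.2) le_rfl
  calc (y₁ t - y₂ t) ^ 2
      = (ξ₁ - ξ₂) ^ 2 + ∫ s in (0:ℝ)..t, 2 * (y₁' s - y₂' s) * (y₁ s - y₂ s) := h₁.sq_sub_eq h₂ ht
    _ ≤ (ξ₁ - ξ₂) ^ 2 + ∫ s in (0:ℝ)..t, (k ^ 2 * (u₁ s - u₂ s) ^ 2 + (y₁ s - y₂ s) ^ 2) := by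
        gcongr
        refine intervalIntegral.integral_mono_ae_restrict ht.1 ?_ ((hdu'.const_mul _).add hdw) hae
        exact ((((h₁.intervalIntegrable_deriv ht).sub (h₂.intervalIntegrable_deriv ht)).const_mul
          2).mul_continuousOn hw)
    _ = (ξ₁ - ξ₂) ^ 2 + k ^ 2 * (∫ s in (0:ℝ)..t, (u₁ s - u₂ s) ^ 2) +
          ∫ s in (0:ℝ)..t, (y₁ s - y₂ s) ^ 2 := by
        rw [intervalIntegral.integral_add (hdu'.const_mul _) hdw,
          intervalIntegral.integral_const_mul]
        ring
    _ ≤ _ := by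
        gcongr
        exact intervalIntegral.integral_mono_interval le_rfl ht.1 ht.2
          (ae_of_all _ fun s => sq_nonneg _) hdu

end IsDynRelay

theorem dyn_relay_lipschitz_general (T ρ₁ ρ₂ k : ℝ)
    (hρ : ρ₁ < ρ₂) (hk : 0 < k)
    (u₁ u₂ : ℝ → ℝ)
    (hu₁ : MemLp u₁ 2 (volume.restrict (Ioc (0:ℝ) T)))
    (hu₂ : MemLp u₂ 2 (volume.restrict (Ioc (0:ℝ) T)))
    (ξ₁ ξ₂ : ℝ)
    (y₁ y₁' y₂ y₂' : ℝ → ℝ)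
    (h₁ : IsDynRelay T ρ₁ ρ₂ k u₁ ξ₁ y₁ y₁')
    (h₂ : IsDynRelay T ρ₁ ρ₂ k u₂ ξ₂ y₂ y₂') :
    ∀ t ∈ Icc (0:ℝ) T,
      |y₁ t - y₂ t| ≤ Real.exp (T / 2) *
        (|ξ₁ - ξ₂| + k * Real.sqrt (∫ s in (0:ℝ)..T, (u₁ s - u₂ s) ^ 2)) := by
  intro t ht
  have hT : 0 ≤ T := ht.1.trans ht.2
  set V := ∫ s in (0:ℝ)..T, (u₁ s - u₂ s) ^ 2
  have hV : 0 ≤ V := intervalIntegral.integral_nonneg hT fun s _ => sq_nonneg _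
  have hgronwall := le_mul_exp_of_le_add_integral
    (((h₁.continuousOn hT).sub (h₂.continuousOn hT)).pow 2)
    (fun s hs => h₁.sq_sub_le_add_integral h₂ hρ.le hk.le hu₁ hu₂ hs) t ht
  have hsq : (y₁ t - y₂ t) ^ 2 ≤ ((ξ₁ - ξ₂) ^ 2 + k ^ 2 * V) * Real.exp (T / 2) ^ 2 := by
    rw [← Real.exp_nat_mul, Nat.cast_ofNat, mul_div_cancel₀ T two_ne_zero]
    refine hgronwall.trans ?_
    gcongr
    linarith [ht.2]
  refine abs_le_of_sq_le_sq (hsq.trans ?_) (by positivity)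
  rw [mul_pow, mul_comm]
  gcongr
  calc (ξ₁ - ξ₂) ^ 2 + k ^ 2 * V
      ≤ (ξ₁ - ξ₂) ^ 2 + k ^ 2 * V + 2 * (|ξ₁ - ξ₂| * k * √V) :=
        le_add_of_nonneg_right (by positivity)
    _ = (|ξ₁ - ξ₂| + k * √V) ^ 2 := by rw [add_sq, mul_pow, Real.sq_sqrt hV, sq_abs]; ring

/-- Lipschitz continuity of the dynamic relay (Lemma 2.3). -/
theorem dyn_relay_lipschitz (T ρ₁ ρ₂ k : ℝ)
    (hT : 0 < T) (hρ : ρ₁ < ρ₂) (hk : 0 < k)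
    (u₁ u₂ : ℝ → ℝ)
    (hu₁ : MemLp u₁ 2 (volume.restrict (Ioc (0:ℝ) T)))
    (hu₂ : MemLp u₂ 2 (volume.restrict (Ioc (0:ℝ) T)))
    (ξ₁ ξ₂ : ℝ) (hξ₁ : ξ₁ ∈ Icc (-1:ℝ) 1) (hξ₂ : ξ₂ ∈ Icc (-1:ℝ) 1)
    (y₁ y₁' y₂ y₂' : ℝ → ℝ)
    (h₁ : IsDynRelay T ρ₁ ρ₂ k u₁ ξ₁ y₁ y₁')
    (h₂ : IsDynRelay T ρ₁ ρ₂ k u₂ ξ₂ y₂ y₂') :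
    ∀ t ∈ Icc (0:ℝ) T,
      |y₁ t - y₂ t| ≤ Real.exp (T / 2) *
        (|ξ₁ - ξ₂| + k * Real.sqrt (∫ s in (0:ℝ)..T, (u₁ s - u₂ s) ^ 2)) :=
  dyn_relay_lipschitz_general T ρ₁ ρ₂ k hρ hk u₁ u₂ hu₁ hu₂ ξ₁ ξ₂ y₁ y₁' y₂ y₂' h₁ h₂
end

section
/- Explicit integral formula for the dynamic relay on intervals where the input stays above the upper threshold (eq. (2.15), first case): Let y be a dynamic relay solution for (u, ξ), and let [a,b] ⊆ [0,T] be such that u(s) ≥ ρ₂ for a.e. s ∈ [a,b]. Then for every t ∈ [a,b], y(t) = min{ 1, y(a) + ∫_a^t k·(u(s) − ρ₂) ds }. -/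
/-!
On `[a, b]` the input gives `g(u) = k (u - ρ₂) =: f ≥ 0`, and the variational inequality says
`y' ≥ f` wherever `y < 1` and `y' ≤ f` wherever `y > -1`. So `y` can never exceed
`F = y(a) + ∫_a f` (while above `F ≥ y(a) ≥ -1` it grows at most like `F`), nor drop below
`min 1 F` (while below it `y < 1`, so it grows at least like `F`). Each comparison is run from
the last time before `t` at which it still held.
-/
open MeasureTheory Set

theorem ae_restrict_Icc_of_ae_restrict_Ioo {p : ℝ → Prop} {a b c d : ℝ}
    (h : ∀ᵐ x ∂volume.restrict (Ioo a b), p x) (hac : a ≤ c) (hdb : d ≤ b) :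
    ∀ᵐ x ∂volume.restrict (Icc c d), p x := by
  rw [← restrict_Ioo_eq_restrict_Icc]
  exact ae_restrict_of_ae_restrict_of_subset (Ioo_subset_Ioo hac hdb) h

theorem integrableOn_Icc_of_memLp {g : ℝ → ℝ} {p : ENNReal} {a b : ℝ} (hp : 1 ≤ p)
    (hg : MemLp g p (volume.restrict (Ioc a b))) : IntegrableOn g (Icc a b) := by
  rw [integrableOn_Icc_iff_integrableOn_Ioc]
  exact hg.integrable hp

theorem MeasureTheory.IntegrableOn.intervalIntegrable_of_mem_Icc {g : ℝ → ℝ} {a b s r : ℝ}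
    (hg : IntegrableOn g (Icc a b)) (hs : s ∈ Icc a b) (hr : r ∈ Icc a b) :
    IntervalIntegrable g volume s r :=
  (hg.mono_set (uIcc_subset_Icc hs hr)).intervalIntegrable

theorem nonpos_of_le_on_positive_excursions {φ : ℝ → ℝ} {a t : ℝ} (hat : a ≤ t)
    (hφ : ContinuousOn φ (Icc a t)) (ha : φ a ≤ 0)
    (hexc : ∀ s ∈ Ico a t, (∀ r ∈ Ioo s t, 0 < φ r) → φ t ≤ φ s) : φ t ≤ 0 := by
  by_contra! ht
  set S := Icc a t ∩ φ ⁻¹' Iic 0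
  have hbdd : BddAbove S := bddAbove_Icc.mono inter_subset_left
  have hmem : sSup S ∈ S :=
    (hφ.preimage_isClosed_of_isClosed isClosed_Icc isClosed_Iic).csSup_mem
      ⟨a, ⟨le_rfl, hat⟩, ha⟩ hbdd
  have hlt : sSup S < t := hmem.1.2.lt_of_ne fun h => (h ▸ hmem.2 : φ t ≤ 0).not_gt ht
  have hpos : ∀ r ∈ Ioo (sSup S) t, 0 < φ r := fun r hr =>
    not_le.1 fun hr0 => (le_csSup hbdd ⟨⟨hmem.1.1.trans hr.1.le, hr.2.le⟩, hr0⟩).not_gt hr.1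
  have hS0 : φ (sSup S) ≤ 0 := hmem.2
  linarith [hexc _ ⟨hmem.1.1, hlt⟩ hpos]

section Comparison

variable {y y' f : ℝ → ℝ} {a t : ℝ}

theorem continuousOn_of_sub_eq_integral (hat : a ≤ t)
    (hy : ∀ s ∈ Icc a t, y t - y s = ∫ x in s..t, y' x) (hy' : IntegrableOn y' (Icc a t)) :
    ContinuousOn y (Icc a t) := by
  rw [← uIcc_of_le hat] at hy' ⊢
  refine ((continuousOn_const (c := y t)).sub
    (intervalIntegral.continuousOn_primitive_interval_left hy')).congr fun s hs => ?_
  rw [uIcc_of_le hat] at hs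
  simp only [Pi.sub_apply]
  linarith [hy s hs]

theorem continuousOn_integral_of_integrableOn_Icc (hat : a ≤ t) (hf : IntegrableOn f (Icc a t)) :
    ContinuousOn (fun s => ∫ x in a..s, f x) (Icc a t) :=
  (intervalIntegral.continuousOn_primitive_interval'
    (hf.intervalIntegrable_of_mem_Icc (left_mem_Icc.2 hat) (right_mem_Icc.2 hat))
    left_mem_uIcc).mono Icc_subset_uIcc

theorem le_add_integral_of_ae_deriv_le (hat : a ≤ t)
    (hy : ∀ s ∈ Icc a t, y t - y s = ∫ x in s..t, y' x) (hy' : IntegrableOn y' (Icc a t))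
    (hf : IntegrableOn f (Icc a t)) (hf0 : ∀ᵐ s ∂volume.restrict (Icc a t), 0 ≤ f s)
    (hderiv : ∀ᵐ s ∂volume.restrict (Icc a t), y a < y s → y' s ≤ f s) :
    y t ≤ y a + ∫ x in a..t, f x := by
  have ha : a ∈ Icc a t := left_mem_Icc.2 hat
  have ht : t ∈ Icc a t := right_mem_Icc.2 hat
  refine sub_nonpos.1 (nonpos_of_le_on_positive_excursions
    (φ := fun s => y s - (y a + ∫ x in a..s, f x)) hat
    ((continuousOn_of_sub_eq_integral hat hy hy').sub
      (continuousOn_const.add (continuousOn_integral_of_integrableOn_Icc hat hf)))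
    (by simp) fun s hs hpos => ?_)
  have hsI : s ∈ Icc a t := Ico_subset_Icc_self hs
  have hIoo : Ioo s t ⊆ Icc a t := Ioo_subset_Icc_self.trans (Icc_subset_Icc_left hs.1)
  have hle : y' ≤ᵐ[volume.restrict (Icc s t)] f := by
    rw [← restrict_Ioo_eq_restrict_Icc]
    filter_upwards [ae_restrict_mem measurableSet_Ioo,
      ae_restrict_of_ae_restrict_of_subset hIoo hderiv] with r hr hderiv_r
    refine hderiv_r ?_
    have : 0 ≤ ∫ x in a..r, f x :=
      intervalIntegral.integral_nonneg_of_ae_restrict (hs.1.trans hr.1.le)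
        (ae_restrict_of_ae_restrict_of_subset (Icc_subset_Icc_right hr.2.le) hf0)
    linarith [hpos r hr]
  have hmono := intervalIntegral.integral_mono_ae_restrict hs.2.le
    (hy'.intervalIntegrable_of_mem_Icc hsI ht) (hf.intervalIntegrable_of_mem_Icc hsI ht) hle
  have hsplit := intervalIntegral.integral_interval_sub_left
    (hf.intervalIntegrable_of_mem_Icc ha ht) (hf.intervalIntegrable_of_mem_Icc ha hsI)
  linarith [hy s hsI]

theorem min_add_integral_le_of_ae_le_deriv {c : ℝ} (hat : a ≤ t)
    (hy : ∀ s ∈ Icc a t, y t - y s = ∫ x in s..t, y' x) (hy' : IntegrableOn y' (Icc a t))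
    (hf : IntegrableOn f (Icc a t)) (hf0 : ∀ᵐ s ∂volume.restrict (Icc a t), 0 ≤ f s)
    (hderiv : ∀ᵐ s ∂volume.restrict (Icc a t), y s < c → f s ≤ y' s) :
    min c (y a + ∫ x in a..t, f x) ≤ y t := by
  have ha : a ∈ Icc a t := left_mem_Icc.2 hat
  have ht : t ∈ Icc a t := right_mem_Icc.2 hat
  refine sub_nonpos.1 (nonpos_of_le_on_positive_excursions
    (φ := fun s => min c (y a + ∫ x in a..s, f x) - y s) hat
    ((continuousOn_const.inf
      (continuousOn_const.add (continuousOn_integral_of_integrableOn_Icc hat hf))).sub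
      (continuousOn_of_sub_eq_integral hat hy hy'))
    (by simp) fun s hs hpos => ?_)
  have hsI : s ∈ Icc a t := Ico_subset_Icc_self hs
  have hIoo : Ioo s t ⊆ Icc a t := Ioo_subset_Icc_self.trans (Icc_subset_Icc_left hs.1)
  have hle : f ≤ᵐ[volume.restrict (Icc s t)] y' := by
    rw [← restrict_Ioo_eq_restrict_Icc]
    filter_upwards [ae_restrict_mem measurableSet_Ioo,
      ae_restrict_of_ae_restrict_of_subset hIoo hderiv] with r hr hderiv_r
    exact hderiv_r ((sub_pos.1 (hpos r hr)).trans_le (min_le_left _ _))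
  have hmono := intervalIntegral.integral_mono_ae_restrict hs.2.le
    (hf.intervalIntegrable_of_mem_Icc hsI ht) (hy'.intervalIntegrable_of_mem_Icc hsI ht) hle
  have hsplit := intervalIntegral.integral_interval_sub_left
    (hf.intervalIntegrable_of_mem_Icc ha ht) (hf.intervalIntegrable_of_mem_Icc ha hsI)
  have hFmono : ∫ x in a..s, f x ≤ ∫ x in a..t, f x :=
    intervalIntegral.integral_mono_interval le_rfl hs.1 hs.2.le
      (by rwa [restrict_Ioc_eq_restrict_Icc]) (hf.intervalIntegrable_of_mem_Icc ha ht)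
  have hmin : min c (y a + ∫ x in a..t, f x) - min c (y a + ∫ x in a..s, f x) ≤
      (∫ x in a..t, f x) - ∫ x in a..s, f x :=
    (le_abs_self _).trans ((abs_min_sub_min_le_max _ _ _ _).trans
      (by simp [abs_of_nonneg (sub_nonneg.2 hFmono), hFmono]))
  linarith [hy s hsI]

end Comparison

theorem forall_mul_sub_nonpos_Icc_sign {q x c d : ℝ} (hcd : c ≤ d)
    (h : ∀ z ∈ Icc c d, q * (z - x) ≤ 0) : (x < d → q ≤ 0) ∧ (c < x → 0 ≤ q) :=
  ⟨fun hx => by nlinarith [h d ⟨hcd, le_rfl⟩], fun hx => by nlinarith [h c ⟨le_rfl, hcd⟩]⟩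

theorem relayG_of_le {ρ₁ ρ₂ k u : ℝ} (hρ : ρ₁ ≤ ρ₂) (hu : ρ₂ ≤ u) :
    relayG ρ₁ ρ₂ k u = k * (u - ρ₂) := by
  simp [relayG, hu, hρ.trans hu]

namespace IsDynRelay

variable {T ρ₁ ρ₂ k ξ : ℝ} {u y y' : ℝ → ℝ}

theorem integrableOn_deriv (hy : IsDynRelay T ρ₁ ρ₂ k u ξ y y') : IntegrableOn y' (Icc 0 T) :=
  integrableOn_Icc_of_memLp one_le_two hy.1

theorem sub_eq_integral (hy : IsDynRelay T ρ₁ ρ₂ k u ξ y y') {s t : ℝ} (hs : s ∈ Icc 0 T)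
    (ht : t ∈ Icc 0 T) : y t - y s = ∫ x in s..t, y' x := by
  have h0 : (0 : ℝ) ∈ Icc 0 T := ⟨le_rfl, hs.1.trans hs.2⟩
  rw [hy.2.2.1 t ht, hy.2.2.1 s hs, add_sub_add_left_eq_sub,
    intervalIntegral.integral_interval_sub_left
      (hy.integrableOn_deriv.intervalIntegrable_of_mem_Icc h0 ht)
      (hy.integrableOn_deriv.intervalIntegrable_of_mem_Icc h0 hs)]

theorem ae_deriv_bounds (hy : IsDynRelay T ρ₁ ρ₂ k u ξ y y') :
    ∀ᵐ t ∂volume.restrict (Ioo 0 T), (y t < 1 → relayG ρ₁ ρ₂ k (u t) ≤ y' t) ∧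
      (-1 < y t → y' t ≤ relayG ρ₁ ρ₂ k (u t)) := by
  filter_upwards [hy.2.2.2.2] with t ht
  obtain ⟨hlt, hgt⟩ := forall_mul_sub_nonpos_Icc_sign (by norm_num) ht
  exact ⟨fun h => sub_nonpos.1 (hlt h), fun h => sub_nonneg.1 (hgt h)⟩

end IsDynRelay

theorem dyn_relay_formula_above_general (T ρ₁ ρ₂ k : ℝ)
    (hρ : ρ₁ < ρ₂) (hk : 0 < k)
    (u : ℝ → ℝ) (hu : MemLp u 2 (volume.restrict (Ioc (0:ℝ) T)))
    (ξ : ℝ)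
    (y y' : ℝ → ℝ) (hy : IsDynRelay T ρ₁ ρ₂ k u ξ y y')
    (a b : ℝ) (ha : 0 ≤ a) (hb : b ≤ T)
    (hub : ∀ᵐ s ∂(volume.restrict (Icc a b)), ρ₂ ≤ u s) :
    ∀ t ∈ Icc a b, y t = min 1 (y a + ∫ s in a..t, k * (u s - ρ₂)) := by
  intro t ht
  have hsub : Icc a t ⊆ Icc 0 T := Icc_subset_Icc ha (ht.2.trans hb)
  have hf : IntegrableOn (fun s => k * (u s - ρ₂)) (Icc 0 T) :=
    ((integrableOn_Icc_of_memLp one_le_two hu).sub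
      (integrableOn_const measure_Icc_lt_top.ne)).const_mul k
  have hae : ∀ᵐ s ∂volume.restrict (Icc a t), 0 ≤ k * (u s - ρ₂) ∧
      (y s < 1 → k * (u s - ρ₂) ≤ y' s) ∧ (-1 < y s → y' s ≤ k * (u s - ρ₂)) := by
    filter_upwards [ae_restrict_of_ae_restrict_of_subset (Icc_subset_Icc_right ht.2) hub,
      ae_restrict_Icc_of_ae_restrict_Ioo hy.ae_deriv_bounds ha (ht.2.trans hb)]
      with s hus hbounds
    rw [relayG_of_le hρ.le hus] at hbounds
    exact ⟨mul_nonneg hk.le (sub_nonneg.2 hus), hbounds⟩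
  have hinc : ∀ s ∈ Icc a t, y t - y s = ∫ x in s..t, y' x := fun s hs =>
    hy.sub_eq_integral (hsub hs) (hsub (right_mem_Icc.2 ht.1))
  have hy' : IntegrableOn y' (Icc a t) := hy.integrableOn_deriv.mono_set hsub
  have hbound : ∀ s ∈ Icc 0 T, |y s| ≤ 1 := hy.2.2.2.1
  have hya : -1 ≤ y a := (abs_le.1 (hbound a (hsub (left_mem_Icc.2 ht.1)))).1
  have hyt : y t ≤ 1 := (abs_le.1 (hbound t (hsub (right_mem_Icc.2 ht.1)))).2
  have hf0 := hae.mono fun s hs => hs.1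
  refine le_antisymm (le_min hyt ?_) ?_
  · exact le_add_integral_of_ae_deriv_le ht.1 hinc hy' (hf.mono_set hsub) hf0
      (hae.mono fun s hs hlt => hs.2.2 (hya.trans_lt hlt))
  · exact min_add_integral_le_of_ae_le_deriv ht.1 hinc hy' (hf.mono_set hsub) hf0
      (hae.mono fun s hs => hs.2.1)

/-- Explicit integral formula for the dynamic relay on intervals where the input stays
above the upper threshold (eq. (2.15), first case). -/
theorem dyn_relay_formula_above (T ρ₁ ρ₂ k : ℝ)
    (hT : 0 < T) (hρ : ρ₁ < ρ₂) (hk : 0 < k)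
    (u : ℝ → ℝ) (hu : MemLp u 2 (volume.restrict (Ioc (0:ℝ) T)))
    (ξ : ℝ) (hξ : ξ ∈ Icc (-1:ℝ) 1)
    (y y' : ℝ → ℝ) (hy : IsDynRelay T ρ₁ ρ₂ k u ξ y y')
    (a b : ℝ) (ha : 0 ≤ a) (hab : a ≤ b) (hb : b ≤ T)
    (hub : ∀ᵐ s ∂(volume.restrict (Icc a b)), ρ₂ ≤ u s) :
    ∀ t ∈ Icc a b, y t = min 1 (y a + ∫ s in a..t, k * (u s - ρ₂)) :=
  dyn_relay_formula_above_general T ρ₁ ρ₂ k hρ hk u hu ξ y y' hy a b ha hb hub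
end
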